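/- arXiv:2406.08609 — 3 statements merged into one kernel-verified Lean document; each statement's English description precedes it below -/
import Mathlib

section
/- Euler's identity: for |q| < 1 and any z, the infinite product (-z; q)_∞ equals the sum ∑_{n=0}^∞ z^n q^{n(n-1)/2} / (q; q)_n, where (a;q)_n = ∏_{j=0}^{n-1}(1 - a q^j). -/
open Finset

/-- Finite q-Pochhammer symbol `(a; q)_n = ∏_{j=0}^{n-1} (1 - a q^j)`. -/
noncomputable def qPoch (a q : ℂ) (n : ℕ) : ℂ := ∏ j ∈ Finset.range n, (1 - a * q ^ j)

/-- Infinite q-Pochhammer symbol `(a; q)_∞ = ∏_{j=0}^{∞} (1 - a q^j)`. -/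
noncomputable def qPochInf (a q : ℂ) : ℂ := ∏' j : ℕ, (1 - a * q ^ j)

/-- q-Pochhammer with integer index, 0 when the index is negative. -/
noncomputable def qPochZ (a q : ℂ) (n : ℤ) : ℂ := if 0 ≤ n then qPoch a q n.toNat else 0

/-- Gaussian binomial coefficient `[a choose b]_q`, 0 when `b < 0` or `b > a`. -/
noncomputable def qBinom (q : ℂ) (a b : ℤ) : ℂ :=
  if 0 ≤ b ∧ b ≤ a then qPoch q q a.toNat / (qPoch q q b.toNat * qPoch q q (a - b).toNat)
  else 0

/-- A partition: a weakly decreasing list of positive integers. -/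
def IsPartition (l : List ℕ) : Prop := l.Pairwise (· ≥ ·) ∧ ∀ x ∈ l, 0 < x

/-- A partition into distinct parts: a strictly decreasing list of positive integers. -/
def IsDistinctPartition (l : List ℕ) : Prop := l.Pairwise (· > ·) ∧ ∀ x ∈ l, 0 < x

/-- Conjugate partition value: `λ'_j = #{i : λ_i ≥ j}`. -/
def partConj (l : List ℕ) (j : ℕ) : ℕ := l.countP (fun x => decide (j ≤ x))

/-- Hook length `h_{i,j}(λ) = λ_i + λ'_j − i − j + 1` (1-indexed). -/
def hookLen (l : List ℕ) (i j : ℕ) : ℤ :=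
  (l.getD (i - 1) 0 : ℤ) + (partConj l j : ℤ) - (i : ℤ) - (j : ℤ) + 1

/-- `C(a, 2) = a(a-1)/2`. -/
def c2 (a : ℤ) : ℤ := a * (a - 1) / 2

section EulerAux
open Filter

section aux
variable {q : ℂ} (hq : ‖q‖ < 1)

lemma c2_succ (n : ℕ) : (n+1) * n / 2 = n * (n-1) / 2 + n := by
  rcases n with _ | m
  · rfl
  · have h1 : (m+1+1) * (m+1) = (m+1) * m + (m+1) * 2 := by ring
    rw [h1, Nat.add_mul_div_right _ _ (by norm_num : 0 < 2)]
    simp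

include hq in
lemma one_sub_ne (n : ℕ) : (1 : ℂ) - q * q ^ n ≠ 0 := by
  intro h
  have h1 : q * q ^ n = 1 := by linear_combination -h
  have : ‖q * q ^ n‖ < 1 := by
    rw [norm_mul, norm_pow]
    calc ‖q‖ * ‖q‖ ^ n ≤ ‖q‖ :=
          mul_le_of_le_one_right (norm_nonneg q) (pow_le_one₀ (norm_nonneg _) hq.le)
      _ < 1 := hq
  rw [h1] at this; simp at this

include hq in
lemma qPoch_ne_zero (n : ℕ) : qPoch q q n ≠ 0 := by
  unfold qPoch
  exact Finset.prod_ne_zero_iff.2 fun j _ => one_sub_ne hq j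
end aux

noncomputable def eT (q z : ℂ) (n : ℕ) : ℂ := z ^ n * q ^ (n * (n - 1) / 2) / qPoch q q n

section aux2
variable {q : ℂ} (hq : ‖q‖ < 1)

lemma qPoch_succ (a : ℂ) (n : ℕ) : qPoch a q (n+1) = qPoch a q n * (1 - a * q ^ n) := by
  unfold qPoch; rw [Finset.prod_range_succ]

include hq in
lemma eT_succ (z : ℂ) (n : ℕ) :
    eT q z (n+1) = eT q z n * (z * q ^ n / (1 - q * q ^ n)) := by
  unfold eT
  simp only [Nat.add_sub_cancel]
  rw [c2_succ, qPoch_succ, pow_add]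
  have h1 := qPoch_ne_zero hq n
  have h2 := one_sub_ne hq n
  field_simp
  ring

include hq in
lemma summable_eT (z : ℂ) : Summable (eT q z) := by
  apply summable_of_ratio_norm_eventually_le (r := 1/2) (by norm_num)
  have hfac : Tendsto (fun n : ℕ => ‖z‖ * ‖q‖ ^ n / (1 - ‖q‖)) atTop (nhds 0) := by
    have h0 : Tendsto (fun n : ℕ => ‖q‖ ^ n) atTop (nhds 0) :=
      tendsto_pow_atTop_nhds_zero_of_lt_one (norm_nonneg q) hq
    have := (h0.const_mul ‖z‖).div_const (1 - ‖q‖)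
    simpa using this
  filter_upwards [hfac.eventually_lt_const (by norm_num : (0:ℝ) < 1/2)] with n hn
  rw [eT_succ hq z n, norm_mul]
  have hw : ‖q * q ^ n‖ ≤ ‖q‖ := by
    rw [norm_mul, norm_pow]
    exact mul_le_of_le_one_right (norm_nonneg q) (pow_le_one₀ (norm_nonneg _) hq.le)
  have hden : 1 - ‖q‖ ≤ ‖1 - q * q ^ n‖ := by
    calc 1 - ‖q‖ ≤ ‖(1:ℂ)‖ - ‖q * q ^ n‖ := by
          simp only [norm_one]; linarith
      _ ≤ ‖1 - q * q ^ n‖ := norm_sub_norm_le _ _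
  have hb : ‖z * q ^ n / (1 - q * q ^ n)‖ ≤ ‖z‖ * ‖q‖ ^ n / (1 - ‖q‖) := by
    rw [norm_div, norm_mul, norm_pow]
    gcongr
  have := mul_le_mul_of_nonneg_left (hb.trans hn.le) (norm_nonneg (eT q z n))
  linarith
end aux2

noncomputable def eS (q z : ℂ) : ℂ := ∑' n : ℕ, eT q z n

section aux3
variable {q : ℂ} (hq : ‖q‖ < 1)

include hq in
lemma eT_key (z : ℂ) (n : ℕ) :
    eT q z (n+1) - eT q (q * z) (n+1) = z * eT q (q * z) n := by
  unfold eT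
  simp only [Nat.add_sub_cancel]
  rw [c2_succ, qPoch_succ, pow_add]
  have h1 := qPoch_ne_zero hq n
  have h2 := one_sub_ne hq n
  field_simp
  ring

include hq in
lemma funEq (z : ℂ) : eS q z = (1 + z) * eS q (q * z) := by
  have h1 := summable_eT hq z
  have h2 := summable_eT hq (q * z)
  have hsub : Summable (fun n => eT q z n - eT q (q * z) n) := h1.sub h2
  have key : eS q z - eS q (q * z) = z * eS q (q * z) := by
    unfold eS
    rw [← Summable.tsum_sub h1 h2, Summable.tsum_eq_zero_add hsub]
    have h0 : eT q z 0 - eT q (q * z) 0 = 0 := by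
      unfold eT qPoch; simp
    rw [h0, zero_add, ← tsum_mul_left]
    exact tsum_congr fun n => eT_key hq z n
  linear_combination key

include hq in
lemma iterEq (z : ℂ) (N : ℕ) : eS q z = qPoch (-z) q N * eS q (q ^ N * z) := by
  induction N with
  | zero => simp [qPoch]
  | succ N ih =>
    rw [ih, qPoch_succ, funEq hq (q ^ N * z)]
    rw [pow_succ]
    ring_nf
end aux3

section aux4
variable {q : ℂ} (hq : ‖q‖ < 1)

lemma eT_scale (c z : ℂ) (n : ℕ) : eT q (c * z) n = c ^ n * eT q z n := by
  unfold eT; rw [mul_pow]; ring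

include hq in
lemma tendsto_eS_one (z : ℂ) :
    Filter.Tendsto (fun N : ℕ => eS q (q ^ N * z)) Filter.atTop (nhds 1) := by
  have hMsum : Summable (fun n => ‖eT q z (n+1)‖) :=
    ((summable_nat_add_iff 1).2 (summable_eT hq z)).norm
  set M := ∑' n : ℕ, ‖eT q z (n+1)‖ with hM
  have hbound : ∀ N : ℕ, ‖eS q (q ^ N * z) - 1‖ ≤ ‖q‖ ^ N * M := by
    intro N
    have hs := summable_eT hq (q ^ N * z)
    have h0 : eT q (q ^ N * z) 0 = 1 := by unfold eT qPoch; simp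
    have heq : eS q (q ^ N * z) - 1 = ∑' n : ℕ, eT q (q ^ N * z) (n+1) := by
      unfold eS
      rw [Summable.tsum_eq_zero_add hs, h0]; ring
    rw [heq]
    have hsn : Summable (fun n => ‖eT q (q ^ N * z) (n+1)‖) :=
      ((summable_nat_add_iff 1).2 hs).norm
    calc ‖∑' n : ℕ, eT q (q ^ N * z) (n+1)‖ ≤ ∑' n : ℕ, ‖eT q (q ^ N * z) (n+1)‖ :=
          norm_tsum_le_tsum_norm hsn
      _ ≤ ∑' n : ℕ, ‖q‖ ^ N * ‖eT q z (n+1)‖ := by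
          apply Summable.tsum_le_tsum _ hsn (hMsum.mul_left _)
          intro n
          rw [eT_scale, norm_mul, norm_pow, norm_pow]
          apply mul_le_mul_of_nonneg_right _ (norm_nonneg _)
          calc (‖q‖ ^ N) ^ (n+1) = ‖q‖ ^ (N * (n+1)) := by rw [← pow_mul]
            _ ≤ ‖q‖ ^ N := pow_le_pow_of_le_one (norm_nonneg q) hq.le (by nlinarith)
      _ = ‖q‖ ^ N * M := tsum_mul_left
  rw [tendsto_iff_norm_sub_tendsto_zero]
  apply squeeze_zero (fun N => norm_nonneg _) hbound
  have h0 : Filter.Tendsto (fun N : ℕ => ‖q‖ ^ N) Filter.atTop (nhds 0) :=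
    tendsto_pow_atTop_nhds_zero_of_lt_one (norm_nonneg q) hq
  simpa using h0.mul_const M
end aux4

section aux5
variable {q : ℂ} (hq : ‖q‖ < 1)

include hq in
lemma multipliable_fac (z : ℂ) : Multipliable (fun j : ℕ => 1 - (-z) * q ^ j) := by
  by_cases h : ∃ j : ℕ, 1 - (-z) * q ^ j = 0
  · obtain ⟨j0, hj0⟩ := h
    refine ⟨0, ?_⟩
    have hev : (fun s : Finset ℕ => ∏ i ∈ s, (1 - (-z) * q ^ i)) =ᶠ[Filter.atTop]
        (fun _ => 0) := by
      filter_upwards [Filter.eventually_ge_atTop ({j0} : Finset ℕ)] with s hs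
      exact Finset.prod_eq_zero (hs (Finset.mem_singleton_self j0)) hj0
    exact Filter.Tendsto.congr' hev.symm tendsto_const_nhds
  · push_neg at h
    have hlog : Summable (fun n : ℕ => Complex.log (1 - (-z) * q ^ n)) := by
      apply Summable.of_norm_bounded_eventually_nat
        (g := fun n => 3/2 * (‖z‖ * ‖q‖ ^ n))
        (((summable_geometric_of_lt_one (norm_nonneg q) hq).mul_left ‖z‖).mul_left (3/2))
      have h0 : Filter.Tendsto (fun n : ℕ => ‖z‖ * ‖q‖ ^ n) Filter.atTop (nhds 0) := by
        simpa using (tendsto_pow_atTop_nhds_zero_of_lt_one (norm_nonneg q) hq).const_mul ‖z‖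
      filter_upwards [h0.eventually_le_const (by norm_num : (0:ℝ) < 1/2)] with n hn
      have h1 : (1 : ℂ) - (-z) * q ^ n = 1 + z * q ^ n := by ring
      rw [h1]
      calc ‖Complex.log (1 + z * q ^ n)‖ ≤ 3/2 * ‖z * q ^ n‖ :=
            Complex.norm_log_one_add_half_le_self (by rwa [norm_mul, norm_pow])
        _ = 3/2 * (‖z‖ * ‖q‖ ^ n) := by rw [norm_mul, norm_pow]
    exact Complex.multipliable_of_summable_log hlog
end aux5

theorem euler_aux_final (q z : ℂ) (hq : ‖q‖ < 1) :
    (∏' j : ℕ, (1 - (-z) * q ^ j)) = ∑' n : ℕ, z ^ n * q ^ (n * (n - 1) / 2) / qPoch q q n := by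
  have hm := multipliable_fac hq z
  have h1 : Filter.Tendsto (fun N : ℕ => qPoch (-z) q N) Filter.atTop
      (nhds (∏' j : ℕ, (1 - (-z) * q ^ j))) := hm.hasProd.tendsto_prod_nat
  have h2 := h1.mul (tendsto_eS_one hq z)
  have h3 : (fun N : ℕ => qPoch (-z) q N * eS q (q ^ N * z)) = fun _ => eS q z :=
    funext fun N => (iterEq hq z N).symm
  rw [h3] at h2
  have h4 := tendsto_nhds_unique h2 tendsto_const_nhds
  have h5 : eS q z = ∑' n : ℕ, z ^ n * q ^ (n * (n - 1) / 2) / qPoch q q n := rfl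
  rw [← h5, ← h4, mul_one]

end EulerAux

theorem stmt_2 (q z : ℂ) (hq : ‖q‖ < 1) :
    qPochInf (-z) q = ∑' n : ℕ, z ^ n * q ^ (n * (n - 1) / 2) / qPoch q q n := by
  exact euler_aux_final q z hq
end

section
/- Fix a positive integer m and set h = 0. Then as formal power series in q, ∑_{k=1}^∞ ∑_{l=1}^k q^{(m-1)(2k-l) + k + l(k-1)} / ((q;q)_{m-1} (q;q)_{k-1}) · [k-1 choose l-1]_q = (1 / ((q;q)_{m-1} (q;q)_∞)) · ∑_{l=1}^∞ q^{l(l+m-1)} (q^l; q)_{2m-1}, where [a choose b]_q = (q;q)_a / ((q;q)_b (q;q)_{a-b}) is the Gaussian binomial coefficient. -/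
open Finset

section
open Filter
namespace QAux

variable {q : ℂ}

lemma qPoch_succ (a : ℂ) (n : ℕ) : qPoch a q (n + 1) = qPoch a q n * (1 - a * q ^ n) :=
  Finset.prod_range_succ _ _

lemma norm_term_lt (hq : ‖q‖ < 1) {a : ℂ} (ha : ‖a‖ < 1) (j : ℕ) : ‖a * q ^ j‖ < 1 := by
  rw [norm_mul, norm_pow]
  calc ‖a‖ * ‖q‖ ^ j ≤ ‖a‖ * 1 := by
        gcongr
        exact pow_le_one₀ (norm_nonneg q) hq.le
    _ < 1 := by simpa using ha

lemma factor_ne (hq : ‖q‖ < 1) {a : ℂ} (ha : ‖a‖ < 1) (j : ℕ) : (1 : ℂ) - a * q ^ j ≠ 0 := by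
  intro h
  have h1 : (1 : ℂ) = a * q ^ j := sub_eq_zero.mp h
  have h2 := norm_term_lt hq ha j
  rw [← h1] at h2
  simp at h2

lemma qPoch_ne (hq : ‖q‖ < 1) {a : ℂ} (ha : ‖a‖ < 1) (n : ℕ) : qPoch a q n ≠ 0 := by
  rw [qPoch, Finset.prod_ne_zero_iff]
  exact fun j _ => factor_ne hq ha j

lemma one_sub_sum_le_prod (s : Finset ℕ) (f : ℕ → ℝ) (h0 : ∀ i, 0 ≤ f i) (h1 : ∀ i, f i ≤ 1) :
    1 - ∑ i ∈ s, f i ≤ ∏ i ∈ s, (1 - f i) := by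
  classical
  induction s using Finset.cons_induction with
  | empty => simp
  | cons a s ha ih =>
    rw [Finset.prod_cons, Finset.sum_cons]
    have hp : (0:ℝ) ≤ ∏ i ∈ s, (1 - f i) :=
      Finset.prod_nonneg fun i _ => by linarith [h1 i]
    have hs : (0:ℝ) ≤ ∑ i ∈ s, f i := Finset.sum_nonneg fun i _ => h0 i
    nlinarith [h0 a, h1 a]

lemma exists_pos_lb (hq : ‖q‖ < 1) : ∃ c : ℝ, 0 < c ∧ ∀ n, c ≤ ‖qPoch q q n‖ := by
  set x := ‖q‖ with hxdef
  have hx0 : (0:ℝ) ≤ x := norm_nonneg q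
  have h1x : (0:ℝ) < 1 - x := by linarith
  obtain ⟨J, hJ⟩ := ((tendsto_pow_atTop_nhds_zero_of_lt_one hx0 hq).eventually
      (gt_mem_nhds (by positivity : (0:ℝ) < (1 - x) / 2))).exists
  -- hJ : x ^ J < (1 - x) / 2
  set P : ℕ → ℝ := fun n => ∏ i ∈ Finset.range n, (1 - x ^ (i + 1)) with hPdef
  have hf0 : ∀ i : ℕ, (0:ℝ) ≤ x ^ (i + 1) := fun i => pow_nonneg hx0 _
  have hf1 : ∀ i : ℕ, x ^ (i + 1) ≤ 1 := fun i => pow_le_one₀ hx0 hq.le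
  have hfpos : ∀ i : ℕ, (0:ℝ) < 1 - x ^ (i + 1) :=
    fun i => sub_pos.mpr (pow_lt_one₀ hx0 hq (by omega))
  have hPpos : ∀ n, 0 < P n := fun n => Finset.prod_pos fun i _ => hfpos i
  have htail : ∀ n, J ≤ n → (1:ℝ)/2 ≤ ∏ i ∈ Finset.Ico J n, (1 - x ^ (i + 1)) := by
    intro n hn
    have hw := one_sub_sum_le_prod (Finset.Ico J n) (fun i => x ^ (i + 1)) hf0 hf1
    have hsum : ∑ i ∈ Finset.Ico J n, x ^ (i + 1) ≤ 1 / 2 := by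
      rw [Finset.sum_Ico_eq_sum_range]
      have h1 : ∑ i ∈ Finset.range (n - J), x ^ (J + i + 1) =
          x ^ (J + 1) * ∑ i ∈ Finset.range (n - J), x ^ i := by
        rw [Finset.mul_sum]
        refine Finset.sum_congr rfl fun i _ => ?_
        rw [← pow_add]
        congr 1
        omega
      rw [h1]
      have h2 : ∑ i ∈ Finset.range (n - J), x ^ i ≤ (1 - x)⁻¹ := by
        have := (summable_geometric_of_lt_one hx0 hq).sum_le_tsum (Finset.range (n - J))
          (fun i _ => pow_nonneg hx0 i)
        rwa [tsum_geometric_of_lt_one hx0 hq] at this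
      have h3 : x ^ (J + 1) ≤ (1 - x) / 2 := by
        calc x ^ (J + 1) = x ^ J * x := by rw [pow_succ]
          _ ≤ x ^ J := mul_le_of_le_one_right (pow_nonneg hx0 J) hq.le
          _ ≤ (1 - x) / 2 := hJ.le
      calc x ^ (J + 1) * ∑ i ∈ Finset.range (n - J), x ^ i
          ≤ ((1 - x) / 2) * (1 - x)⁻¹ := by
            apply mul_le_mul h3 h2 (Finset.sum_nonneg fun i _ => pow_nonneg hx0 i) (by positivity)
        _ = 1 / 2 := by field_simp
    linarith
  refine ⟨P J * (1 / 2), mul_pos (hPpos J) one_half_pos, fun n => ?_⟩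
  have key : P J * (1 / 2) ≤ P n := by
    rcases le_or_gt J n with h | h
    · have := Finset.prod_range_mul_prod_Ico (fun i => 1 - x ^ (i + 1)) h
      have h2 := htail n h
      calc P J * (1 / 2) ≤ P J * ∏ i ∈ Finset.Ico J n, (1 - x ^ (i + 1)) := by
            gcongr
            exact (hPpos J).le
        _ = P n := this
    · have := Finset.prod_range_mul_prod_Ico (fun i => 1 - x ^ (i + 1)) h.le
      have h2 : ∏ i ∈ Finset.Ico n J, (1 - x ^ (i + 1)) ≤ 1 :=
        Finset.prod_le_one (fun i _ => (hfpos i).le) (fun i _ => by linarith [hf0 i])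
      have h3 : P J ≤ P n := by
        calc P J = P n * ∏ i ∈ Finset.Ico n J, (1 - x ^ (i + 1)) := this.symm
          _ ≤ P n * 1 := by gcongr; exact (hPpos n).le
          _ = P n := by ring
      nlinarith [hPpos J]
  refine key.trans ?_
  rw [qPoch, norm_prod]
  apply Finset.prod_le_prod (fun i _ => (hfpos i).le)
  intro i _
  have h1 : ‖(1:ℂ)‖ - ‖q * q ^ i‖ ≤ ‖1 - q * q ^ i‖ := norm_sub_norm_le _ _
  have h2 : ‖q * q ^ i‖ = x ^ (i + 1) := by
    rw [norm_mul, norm_pow, ← hxdef, pow_succ]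
    ring
  rw [h2, norm_one] at h1
  exact h1


lemma summable_F (hq : ‖q‖ < 1) {c : ℝ} (hc : 0 < c) (hcb : ∀ n, c ≤ ‖qPoch q q n‖)
    {z : ℂ} (hz : ‖z‖ < 1) : Summable (fun n : ℕ => z ^ n / qPoch q q n) := by
  apply Summable.of_norm_bounded (g := fun n => ‖z‖ ^ n / c)
    ((summable_geometric_of_lt_one (norm_nonneg z) hz).div_const c)
  intro n
  rw [norm_div, norm_pow]
  gcongr
  exact hcb n

lemma summable_log (hq : ‖q‖ < 1) {a : ℂ} (ha : ‖a‖ < 1) :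
    Summable fun i : ℕ => Complex.log (1 - a * q ^ i) := by
  set K : ℝ := ‖a‖ * (‖a‖ * (1 - ‖a‖)⁻¹ / 2 + 1) with hK
  apply Summable.of_norm_bounded (g := fun i => K * ‖q‖ ^ i)
    ((summable_geometric_of_lt_one (norm_nonneg q) hq).mul_left K)
  intro i
  have hr : ‖-(a * q ^ i)‖ = ‖a‖ * ‖q‖ ^ i := by rw [norm_neg, norm_mul, norm_pow]
  have hrle : ‖a‖ * ‖q‖ ^ i ≤ ‖a‖ :=
    mul_le_of_le_one_right (norm_nonneg a) (pow_le_one₀ (norm_nonneg q) hq.le)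
  have hrlt : ‖-(a * q ^ i)‖ < 1 := by rw [hr]; exact lt_of_le_of_lt hrle ha
  have hlog := Complex.norm_log_one_add_le hrlt
  rw [show (1 : ℂ) + -(a * q ^ i) = 1 - a * q ^ i by ring] at hlog
  refine hlog.trans ?_
  rw [hr]
  set r : ℝ := ‖a‖ * ‖q‖ ^ i with hrdef
  have hr0 : 0 ≤ r := mul_nonneg (norm_nonneg a) (pow_nonneg (norm_nonneg q) i)
  have hKt : K * ‖q‖ ^ i = r * ‖a‖ * (1 - ‖a‖)⁻¹ / 2 + r := by rw [hK, hrdef]; ring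
  rw [hKt]
  have h1 : r ^ 2 ≤ r * ‖a‖ := by nlinarith
  have h2 : (1 - r)⁻¹ ≤ (1 - ‖a‖)⁻¹ := by
    apply inv_anti₀ (by linarith) (by linarith)
  have h3 : r ^ 2 * (1 - r)⁻¹ ≤ (r * ‖a‖) * (1 - ‖a‖)⁻¹ := by
    apply mul_le_mul h1 h2 (inv_nonneg.mpr (by linarith)) (by positivity)
  linarith

lemma multipliable_poch (hq : ‖q‖ < 1) {a : ℂ} (ha : ‖a‖ < 1) :
    Multipliable (fun i : ℕ => 1 - a * q ^ i) :=
  Complex.multipliable_of_summable_log (summable_log hq ha)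

lemma qPochInf_eq_exp (hq : ‖q‖ < 1) {a : ℂ} (ha : ‖a‖ < 1) :
    qPochInf a q = Complex.exp (∑' i : ℕ, Complex.log (1 - a * q ^ i)) := by
  have h := Complex.cexp_tsum_eq_tprod (f := fun i => 1 - a * q ^ i)
    (fun i => factor_ne hq ha i) (summable_log hq ha)
  have h2 := h
  simpa [qPochInf] using h2.symm

lemma qPochInf_ne (hq : ‖q‖ < 1) {a : ℂ} (ha : ‖a‖ < 1) : qPochInf a q ≠ 0 := by
  rw [qPochInf_eq_exp hq ha]; exact Complex.exp_ne_zero _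

lemma qPochInf_shift (hq : ‖q‖ < 1) {a : ℂ} (ha : ‖a‖ < 1) (n : ℕ) :
    qPochInf a q = qPoch a q n * qPochInf (a * q ^ n) q := by
  have hs := summable_log hq ha
  have key := Summable.sum_add_tsum_nat_add (f := fun i => Complex.log (1 - a * q ^ i)) n hs
  have han : ‖a * q ^ n‖ < 1 := norm_term_lt hq ha n
  rw [qPochInf_eq_exp hq ha, qPochInf_eq_exp hq han, ← key, Complex.exp_add]
  congr 1
  · rw [Complex.exp_sum, qPoch]
    exact Finset.prod_congr rfl fun i _ => Complex.exp_log (factor_ne hq ha i)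
  · congr 1
    apply tsum_congr
    intro i
    show Complex.log (1 - a * q ^ (i + n)) = Complex.log (1 - a * q ^ n * q ^ i)
    have harg : a * q ^ (i + n) = a * q ^ n * q ^ i := by rw [pow_add]; ring
    rw [harg]

lemma feq (hq : ‖q‖ < 1) {c : ℝ} (hc : 0 < c) (hcb : ∀ n, c ≤ ‖qPoch q q n‖)
    {w : ℂ} (hw : ‖w‖ < 1) :
    (1 - w) * ∑' n : ℕ, w ^ n / qPoch q q n = ∑' n : ℕ, (q * w) ^ n / qPoch q q n := by
  have hqw : ‖q * w‖ < 1 := by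
    rw [norm_mul]
    calc ‖q‖ * ‖w‖ ≤ 1 * ‖w‖ := mul_le_mul_of_nonneg_right hq.le (norm_nonneg w)
      _ = ‖w‖ := one_mul _
      _ < 1 := hw
  have hsw := summable_F hq hc hcb hw
  have hsqw := summable_F hq hc hcb hqw
  have htail : Summable (fun n : ℕ => w ^ (n + 1) / qPoch q q (n + 1)) :=
    (summable_nat_add_iff (f := fun n : ℕ => w ^ n / qPoch q q n) 1).mpr hsw
  have htailq : Summable (fun n : ℕ => (q * w) ^ (n + 1) / qPoch q q (n + 1)) :=
    (summable_nat_add_iff (f := fun n : ℕ => (q * w) ^ n / qPoch q q n) 1).mpr hsqw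
  have e1 : ∑' n : ℕ, w ^ n / qPoch q q n = 1 + ∑' n : ℕ, w ^ (n + 1) / qPoch q q (n + 1) := by
    rw [hsw.tsum_eq_zero_add]
    simp [qPoch]
  have e2 : ∑' n : ℕ, (q * w) ^ n / qPoch q q n
      = 1 + ∑' n : ℕ, (q * w) ^ (n + 1) / qPoch q q (n + 1) := by
    rw [hsqw.tsum_eq_zero_add]
    simp [qPoch]
  have e3 : ∀ n : ℕ, w ^ (n + 1) / qPoch q q (n + 1) - (q * w) ^ (n + 1) / qPoch q q (n + 1)
      = w * (w ^ n / qPoch q q n) := by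
    intro n
    have hfac : (1 : ℂ) - q * q ^ n ≠ 0 := factor_ne hq hq n
    have hPn : qPoch q q n ≠ 0 := qPoch_ne hq hq n
    rw [qPoch_succ]
    field_simp
    ring
  have e4 : (∑' n : ℕ, w ^ n / qPoch q q n) - (∑' n : ℕ, (q * w) ^ n / qPoch q q n)
      = w * ∑' n : ℕ, w ^ n / qPoch q q n := by
    calc (∑' n : ℕ, w ^ n / qPoch q q n) - (∑' n : ℕ, (q * w) ^ n / qPoch q q n)
        = (∑' n : ℕ, w ^ (n + 1) / qPoch q q (n + 1))
          - (∑' n : ℕ, (q * w) ^ (n + 1) / qPoch q q (n + 1)) := by rw [e1, e2]; ring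
      _ = ∑' n : ℕ, (w ^ (n + 1) / qPoch q q (n + 1) - (q * w) ^ (n + 1) / qPoch q q (n + 1)) :=
          (htail.tsum_sub htailq).symm
      _ = ∑' n : ℕ, w * (w ^ n / qPoch q q n) := tsum_congr e3
      _ = w * ∑' n : ℕ, w ^ n / qPoch q q n := tsum_mul_left
  linear_combination e4

lemma iter (hq : ‖q‖ < 1) {c : ℝ} (hc : 0 < c) (hcb : ∀ n, c ≤ ‖qPoch q q n‖)
    {z : ℂ} (hz : ‖z‖ < 1) (N : ℕ) :
    qPoch z q N * ∑' n : ℕ, z ^ n / qPoch q q n = ∑' n : ℕ, (q ^ N * z) ^ n / qPoch q q n := by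
  induction N with
  | zero => simp [qPoch]
  | succ N ih =>
    have hzN : ‖q ^ N * z‖ < 1 := by
      rw [norm_mul, norm_pow]
      calc ‖q‖ ^ N * ‖z‖ ≤ 1 * ‖z‖ :=
            mul_le_mul_of_nonneg_right (pow_le_one₀ (norm_nonneg q) hq.le) (norm_nonneg z)
        _ = ‖z‖ := one_mul _
        _ < 1 := hz
    have hstep := feq hq hc hcb hzN
    calc qPoch z q (N + 1) * ∑' n : ℕ, z ^ n / qPoch q q n
        = (1 - q ^ N * z) * (qPoch z q N * ∑' n : ℕ, z ^ n / qPoch q q n) := by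
          rw [qPoch_succ]; ring
      _ = (1 - q ^ N * z) * ∑' n : ℕ, (q ^ N * z) ^ n / qPoch q q n := by rw [ih]
      _ = ∑' n : ℕ, (q * (q ^ N * z)) ^ n / qPoch q q n := hstep
      _ = ∑' n : ℕ, (q ^ (N + 1) * z) ^ n / qPoch q q n := by
          apply tsum_congr; intro n; congr 2; ring

lemma tail_bound (hq : ‖q‖ < 1) {c : ℝ} (hc : 0 < c) (hcb : ∀ n, c ≤ ‖qPoch q q n‖)
    {w : ℂ} (hw : ‖w‖ < 1) :
    ‖(∑' n : ℕ, w ^ n / qPoch q q n) - 1‖ ≤ ‖w‖ * (1 - ‖w‖)⁻¹ / c := by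
  have hsw := summable_F hq hc hcb hw
  have htail : Summable (fun n : ℕ => w ^ (n + 1) / qPoch q q (n + 1)) :=
    (summable_nat_add_iff (f := fun n : ℕ => w ^ n / qPoch q q n) 1).mpr hsw
  have e1 : (∑' n : ℕ, w ^ n / qPoch q q n) - 1
      = ∑' n : ℕ, w ^ (n + 1) / qPoch q q (n + 1) := by
    rw [hsw.tsum_eq_zero_add]
    simp [qPoch]
  rw [e1]
  have hnorm : Summable (fun n : ℕ => ‖w ^ (n + 1) / qPoch q q (n + 1)‖) :=
    summable_norm_iff.mpr htail
  have hmaj : Summable (fun n : ℕ => (‖w‖ * (1 - ‖w‖)⁻¹ / c) * (1 - ‖w‖) * ‖w‖ ^ n) := by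
    exact (summable_geometric_of_lt_one (norm_nonneg w) hw).mul_left _
  calc ‖∑' n : ℕ, w ^ (n + 1) / qPoch q q (n + 1)‖
      ≤ ∑' n : ℕ, ‖w ^ (n + 1) / qPoch q q (n + 1)‖ := norm_tsum_le_tsum_norm hnorm
    _ ≤ ∑' n : ℕ, (‖w‖ / c) * ‖w‖ ^ n := by
        apply Summable.tsum_le_tsum _ hnorm ((summable_geometric_of_lt_one (norm_nonneg w) hw).mul_left _)
        intro n
        rw [norm_div, norm_pow]
        calc ‖w‖ ^ (n + 1) / ‖qPoch q q (n + 1)‖ ≤ ‖w‖ ^ (n + 1) / c := by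
              gcongr
              exact hcb (n + 1)
          _ = (‖w‖ / c) * ‖w‖ ^ n := by rw [pow_succ]; ring
    _ = (‖w‖ / c) * ∑' n : ℕ, ‖w‖ ^ n := tsum_mul_left
    _ = (‖w‖ / c) * (1 - ‖w‖)⁻¹ := by rw [tsum_geometric_of_lt_one (norm_nonneg w) hw]
    _ = ‖w‖ * (1 - ‖w‖)⁻¹ / c := by ring

lemma euler (hq : ‖q‖ < 1) {c : ℝ} (hc : 0 < c) (hcb : ∀ n, c ≤ ‖qPoch q q n‖)
    {z : ℂ} (hz : ‖z‖ < 1) :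
    qPochInf z q * ∑' n : ℕ, z ^ n / qPoch q q n = 1 := by
  have hmul : Multipliable (fun i : ℕ => 1 - z * q ^ i) := multipliable_poch hq hz
  have hT1 : Tendsto (fun N : ℕ => qPoch z q N * ∑' n : ℕ, z ^ n / qPoch q q n) atTop
      (nhds (qPochInf z q * ∑' n : ℕ, z ^ n / qPoch q q n)) := by
    have h := hmul.hasProd.tendsto_prod_nat
    exact h.mul_const _
  have hT2 : Tendsto (fun N : ℕ => ∑' n : ℕ, (q ^ N * z) ^ n / qPoch q q n) atTop (nhds 1) := by
    rw [← tendsto_sub_nhds_zero_iff]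
    apply squeeze_zero_norm (a := fun N : ℕ => (‖z‖ * (1 - ‖z‖)⁻¹ / c) * ‖q‖ ^ N)
    · intro N
      have hzN : ‖q ^ N * z‖ < 1 := by
        rw [norm_mul, norm_pow]
        calc ‖q‖ ^ N * ‖z‖ ≤ 1 * ‖z‖ :=
              mul_le_mul_of_nonneg_right (pow_le_one₀ (norm_nonneg q) hq.le) (norm_nonneg z)
          _ = ‖z‖ := one_mul _
          _ < 1 := hz
      have hb := tail_bound hq hc hcb hzN
      refine hb.trans ?_
      have h1 : ‖q ^ N * z‖ = ‖q‖ ^ N * ‖z‖ := by rw [norm_mul, norm_pow]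
      have h2 : ‖q ^ N * z‖ ≤ ‖z‖ := by
        rw [h1]
        calc ‖q‖ ^ N * ‖z‖ ≤ 1 * ‖z‖ :=
              mul_le_mul_of_nonneg_right (pow_le_one₀ (norm_nonneg q) hq.le) (norm_nonneg z)
          _ = ‖z‖ := one_mul _
      have h3 : (1 - ‖q ^ N * z‖)⁻¹ ≤ (1 - ‖z‖)⁻¹ :=
        inv_anti₀ (by linarith) (by linarith)
      calc ‖q ^ N * z‖ * (1 - ‖q ^ N * z‖)⁻¹ / c
          ≤ (‖q‖ ^ N * ‖z‖) * (1 - ‖z‖)⁻¹ / c := by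
            rw [h1]
            gcongr
            · linarith
        _ = (‖z‖ * (1 - ‖z‖)⁻¹ / c) * ‖q‖ ^ N := by ring
    · simpa using (tendsto_pow_atTop_nhds_zero_of_lt_one (norm_nonneg q) hq).const_mul
        (‖z‖ * (1 - ‖z‖)⁻¹ / c)
  have heq : (fun N : ℕ => qPoch z q N * ∑' n : ℕ, z ^ n / qPoch q q n)
      = fun N : ℕ => ∑' n : ℕ, (q ^ N * z) ^ n / qPoch q q n :=
    funext fun N => iter hq hc hcb hz N
  rw [heq] at hT1
  exact tendsto_nhds_unique hT1 hT2


end QAux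
end

set_option maxHeartbeats 2000000 in
theorem stmt_3 (q : ℂ) (hq : ‖q‖ < 1) (m : ℕ) (hm : 1 ≤ m) :
    (∑' k : ℕ, ∑ l ∈ Finset.Icc 1 (k + 1),
        q ^ ((m - 1) * (2 * (k + 1) - l) + (k + 1) + l * k) /
            (qPoch q q (m - 1) * qPoch q q k) * qBinom q (k : ℤ) ((l : ℤ) - 1)) =
      (1 / (qPoch q q (m - 1) * qPochInf q q)) *
        ∑' l : ℕ, q ^ ((l + 1) * (l + m)) * qPoch (q ^ (l + 1)) q (2 * m - 1) := by
  classical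
  obtain ⟨m', rfl⟩ : ∃ m', m = m' + 1 := ⟨m - 1, by omega⟩
  simp only [Nat.add_sub_cancel, show 2 * (m' + 1) - 1 = 2 * m' + 1 from by omega]
  obtain ⟨c, hc, hcb⟩ := QAux.exists_pos_lb hq
  have hA : qPoch q q m' ≠ 0 := QAux.qPoch_ne hq hq m'
  have hIq : qPochInf q q ≠ 0 := QAux.qPochInf_ne hq hq
  set g : ℕ × ℕ → ℂ := fun p =>
    q ^ (m' * (p.1 + 2 * p.2 + 1) + (2 * p.1 + 2 * p.2 + 1) + (p.1 * p.1 + p.1 * p.2)) /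
      (qPoch q q m' * qPoch q q p.1 * qPoch q q p.2) with hgdef
  have hG : Summable g := by
    apply Summable.of_norm_bounded
      (g := fun p : ℕ × ℕ => (‖q‖ ^ p.1 / c) * (‖q‖ ^ p.2 / (c * c)))
      (Summable.mul_of_nonneg
        ((summable_geometric_of_lt_one (norm_nonneg q) hq).div_const c)
        ((summable_geometric_of_lt_one (norm_nonneg q) hq).div_const (c * c))
        (fun i => by positivity) (fun i => by positivity))
    rintro ⟨j, n⟩
    simp only [hgdef]
    rw [norm_div, norm_pow, norm_mul, norm_mul]
    have hle : j + n ≤ m' * (j + 2 * n + 1) + (2 * j + 2 * n + 1) + (j * j + j * n) := by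
      calc j + n ≤ 2 * j + 2 * n + 1 := by omega
        _ ≤ m' * (j + 2 * n + 1) + (2 * j + 2 * n + 1) := Nat.le_add_left _ _
        _ ≤ _ := Nat.le_add_right _ _
    have hnum : ‖q‖ ^ (m' * (j + 2 * n + 1) + (2 * j + 2 * n + 1) + (j * j + j * n))
        ≤ ‖q‖ ^ (j + n) := pow_le_pow_of_le_one (norm_nonneg q) hq.le hle
    have hden : c * (c * c) ≤ ‖qPoch q q m'‖ * ‖qPoch q q j‖ * ‖qPoch q q n‖ := by
      calc c * (c * c) = c * c * c := by ring
        _ ≤ ‖qPoch q q m'‖ * ‖qPoch q q j‖ * ‖qPoch q q n‖ := by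
            apply mul_le_mul (mul_le_mul (hcb m') (hcb j) hc.le (norm_nonneg _)) (hcb n)
              hc.le (mul_nonneg (norm_nonneg _) (norm_nonneg _))
    calc ‖q‖ ^ (m' * (j + 2 * n + 1) + (2 * j + 2 * n + 1) + (j * j + j * n)) /
          (‖qPoch q q m'‖ * ‖qPoch q q j‖ * ‖qPoch q q n‖)
        ≤ ‖q‖ ^ (j + n) / (c * (c * c)) :=
          div_le_div₀ (pow_nonneg (norm_nonneg q) _) hnum (by positivity) hden
      _ = (‖q‖ ^ j / c) * (‖q‖ ^ n / (c * c)) := by rw [pow_add]; ring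
  have step1 : ∀ k : ℕ, (∑ l ∈ Finset.Icc 1 (k + 1),
      q ^ (m' * (2 * (k + 1) - l) + (k + 1) + l * k) /
          (qPoch q q m' * qPoch q q k) * qBinom q (k : ℤ) ((l : ℤ) - 1))
      = ∑ p ∈ Finset.HasAntidiagonal.antidiagonal k, g p := by
    intro k
    rw [Finset.Nat.sum_antidiagonal_eq_sum_range_succ (fun a b => g (a, b)) k]
    rw [← Finset.Ico_add_one_right_eq_Icc, Finset.sum_Ico_eq_sum_range]
    simp only [Nat.add_sub_cancel]
    apply Finset.sum_congr rfl
    intro i hi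
    rw [Finset.mem_range] at hi
    obtain ⟨n, rfl⟩ : ∃ n, k = i + n := ⟨k - i, by omega⟩
    have hcond : (0 : ℤ) ≤ ((1 + i : ℕ) : ℤ) - 1 ∧ ((1 + i : ℕ) : ℤ) - 1 ≤ ((i + n : ℕ) : ℤ) :=
      ⟨by push_cast; omega, by push_cast; omega⟩
    rw [qBinom, if_pos hcond]
    have ht1 : (((1 + i : ℕ) : ℤ) - 1).toNat = i := by omega
    have ht2 : (((i + n : ℕ) : ℤ) - (((1 + i : ℕ) : ℤ) - 1)).toNat = n := by omega
    have ht3 : ((i + n : ℕ) : ℤ).toNat = i + n := by omega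
    rw [ht1, ht2, ht3]
    have he : 2 * (i + n + 1) - (1 + i) = i + 2 * n + 1 := by omega
    rw [he]
    have hPk := QAux.qPoch_ne hq hq (i + n)
    have hPi := QAux.qPoch_ne hq hq i
    have hPn := QAux.qPoch_ne hq hq n
    simp only [hgdef]
    have hexp : m' * (i + 2 * n + 1) + (i + n + 1) + (1 + i) * (i + n)
        = m' * (i + 2 * n + 1) + (2 * i + 2 * n + 1) + (i * i + i * n) := by ring
    rw [hexp]
    simp only [Nat.add_sub_cancel_left]
    field_simp
  have perj : ∀ j : ℕ, (∑' n : ℕ, g (j, n))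
      = (1 / (qPoch q q m' * qPochInf q q)) *
        (q ^ ((j + 1) * (j + (m' + 1))) * qPoch (q ^ (j + 1)) q (2 * m' + 1)) := by
    intro j
    have hwn : ‖q ^ (2 * m' + 2 + j)‖ < 1 := by
      rw [norm_pow]; exact pow_lt_one₀ (norm_nonneg q) hq (by omega)
    have hqj1 : ‖q ^ (j + 1)‖ < 1 := by
      rw [norm_pow]; exact pow_lt_one₀ (norm_nonneg q) hq (by omega)
    have hPj := QAux.qPoch_ne hq hq j
    have hQ := QAux.qPoch_ne hq hqj1 (2 * m' + 1)
    have hIw := QAux.qPochInf_ne hq hwn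
    have hEuler := QAux.euler hq hc hcb hwn
    have hF : (∑' n : ℕ, (q ^ (2 * m' + 2 + j)) ^ n / qPoch q q n)
        = (qPochInf (q ^ (2 * m' + 2 + j)) q)⁻¹ :=
      (inv_eq_of_mul_eq_one_right hEuler).symm
    have hsplit : qPochInf q q
        = qPoch q q j * qPoch (q ^ (j + 1)) q (2 * m' + 1) * qPochInf (q ^ (2 * m' + 2 + j)) q := by
      have s1 := QAux.qPochInf_shift hq hq j
      have s2 := QAux.qPochInf_shift hq hqj1 (2 * m' + 1)
      have e1 : q * q ^ j = q ^ (j + 1) := (pow_succ' q j).symm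
      have e2 : q ^ (j + 1) * q ^ (2 * m' + 1) = q ^ (2 * m' + 2 + j) := by
        rw [← pow_add]; congr 1; omega
      rw [s1, e1, s2, e2, mul_assoc]
    calc (∑' n : ℕ, g (j, n))
        = ∑' n : ℕ, (q ^ ((j + 1) * (j + (m' + 1))) / (qPoch q q m' * qPoch q q j)) *
            ((q ^ (2 * m' + 2 + j)) ^ n / qPoch q q n) := by
          apply tsum_congr
          intro n
          simp only [hgdef]
          have hE : m' * (j + 2 * n + 1) + (2 * j + 2 * n + 1) + (j * j + j * n)
              = (j + 1) * (j + (m' + 1)) + (2 * m' + 2 + j) * n := by ring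
          rw [hE, pow_add, pow_mul]
          ring
      _ = (q ^ ((j + 1) * (j + (m' + 1))) / (qPoch q q m' * qPoch q q j)) *
            ∑' n : ℕ, (q ^ (2 * m' + 2 + j)) ^ n / qPoch q q n := tsum_mul_left
      _ = (q ^ ((j + 1) * (j + (m' + 1))) / (qPoch q q m' * qPoch q q j)) *
            (qPochInf (q ^ (2 * m' + 2 + j)) q)⁻¹ := by rw [hF]
      _ = (1 / (qPoch q q m' * qPochInf q q)) *
            (q ^ ((j + 1) * (j + (m' + 1))) * qPoch (q ^ (j + 1)) q (2 * m' + 1)) := by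
          rw [hsplit]
          field_simp
  calc (∑' k : ℕ, ∑ l ∈ Finset.Icc 1 (k + 1),
        q ^ (m' * (2 * (k + 1) - l) + (k + 1) + l * k) /
            (qPoch q q m' * qPoch q q k) * qBinom q (k : ℤ) ((l : ℤ) - 1))
      = ∑' k : ℕ, ∑ p ∈ Finset.HasAntidiagonal.antidiagonal k, g p := tsum_congr step1
    _ = ∑' p : ℕ × ℕ, g p := by
        have hsig : Summable fun x : Σ k : ℕ, {p // p ∈ Finset.HasAntidiagonal.antidiagonal k} => g x.2 :=
          Finset.HasAntidiagonal.sigmaAntidiagonalEquivProd.summable_iff.mpr hG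
        have hfin : ∀ k : ℕ, (∑ p ∈ Finset.HasAntidiagonal.antidiagonal k, g p)
            = ∑' (p : {p // p ∈ Finset.HasAntidiagonal.antidiagonal k}), g ↑p :=
          fun k => ((tsum_fintype _).trans (Finset.sum_finset_coe _ _)).symm
        rw [tsum_congr hfin, ← Summable.tsum_sigma' (fun k => (hasSum_fintype _).summable) hsig]
        exact Finset.HasAntidiagonal.sigmaAntidiagonalEquivProd.tsum_eq g
    _ = ∑' j : ℕ, ∑' n : ℕ, g (j, n) := hG.tsum_prod' hG.prod_factor
    _ = ∑' j : ℕ, (1 / (qPoch q q m' * qPochInf q q)) *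
          (q ^ ((j + 1) * (j + (m' + 1))) * qPoch (q ^ (j + 1)) q (2 * m' + 1)) :=
        tsum_congr perj
    _ = (1 / (qPoch q q m' * qPochInf q q)) *
          ∑' l : ℕ, q ^ ((l + 1) * (l + (m' + 1))) * qPoch (q ^ (l + 1)) q (2 * m' + 1) :=
        tsum_mul_left
end

section
/- Fix integers m ≥ 1, h, and n ≥ 1. The number of partitions λ of n that have an h-fixed hook in the mth column arising from a part of size exactly m (i.e., there exists an index s with λ_s = m and h_{s,m}(λ) = s + h) equals the total number of occurrences, across all partitions μ of n − mh, such that μ has exactly one part equal to m, no parts of sizes m+1, m+2, …, 2m−1, and at least −h parts of size at least 2m (the last condition being vacuous when h ≥ 0). -/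
open Finset

namespace Stmt9Aux

open Multiset

/-- countP split: #{x ≥ c} = #{x > c} + #{x = c}. -/
lemma countP_le_split (c : ℕ) (s : Multiset ℕ) :
    s.countP (fun x => c ≤ x) = s.countP (fun x => c < x) + s.count c := by
  induction s using Multiset.induction_on with
  | empty => simp
  | cons a s ih =>
    rw [countP_cons, countP_cons, count_cons, ih]
    split_ifs <;> omega

/-- In a weakly decreasing list, entries ≥ c form a prefix of length countP (c ≤ ·). -/
lemma sorted_le_get_iff : ∀ (l : List ℕ), l.Pairwise (· ≥ ·) → ∀ (c i : ℕ) (hi : i < l.length),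
    (c ≤ l.get ⟨i, hi⟩ ↔ i < l.countP (fun x => decide (c ≤ x)))
  | [], _, _, _, hi => by simp at hi
  | a :: tl, hl, c, i, hi => by
    obtain ⟨h1, h2⟩ := List.pairwise_cons.mp hl
    rw [List.countP_cons]
    cases i with
    | zero =>
      simp only [List.get]
      by_cases hca : c ≤ a
      · simp [hca]
      · simp only [hca, decide_eq_true_eq, if_neg hca]
        have : tl.countP (fun x => decide (c ≤ x)) = 0 := by
          rw [List.countP_eq_zero]
          intro x hx
          simp only [decide_eq_true_eq]
          have := h1 x hx
          omega
        simp [hca, this]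
    | succ j =>
      have hj : j < tl.length := by simpa using hi
      have ih := sorted_le_get_iff tl h2 c j hj
      have hget : (a :: tl).get ⟨j+1, hi⟩ = tl.get ⟨j, hj⟩ := rfl
      rw [hget, ih]
      split_ifs with hd
      · omega
      · simp only [decide_eq_true_eq] at hd
        have hz : tl.countP (fun x => decide (c ≤ x)) = 0 := by
          rw [List.countP_eq_zero]
          intro x hx
          simp only [decide_eq_true_eq]
          have := h1 x hx
          omega
        omega

lemma exists_s_iff (m : ℕ) (hm : 1 ≤ m) (h : ℤ) (l : List ℕ) (hl : l.Pairwise (· ≥ ·)) :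
    (∃ s : ℕ, 1 ≤ s ∧ s ≤ l.length ∧ l.getD (s - 1) 0 = m ∧ hookLen l s m = (s : ℤ) + h)
    ↔ ∃ c : ℕ, l.countP (fun x => decide (m + 1 ≤ x)) < c ∧
        c ≤ l.countP (fun x => decide (m ≤ x)) ∧
        2 * (c : ℤ) = (l.countP (fun x => decide (m ≤ x)) : ℤ) + 1 - h := by
  have hat : l.countP (fun x => decide (m + 1 ≤ x)) ≤ l.countP (fun x => decide (m ≤ x)) := by
    apply List.countP_mono_left
    intro x _
    simp only [decide_eq_true_eq]
    omega
  constructor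
  · rintro ⟨s, hs1, hs2, hs3, hs4⟩
    have hi : s - 1 < l.length := by omega
    rw [List.getD_eq_getElem _ _ hi] at hs3
    have hget : l.get ⟨s - 1, hi⟩ = m := by rw [List.get_eq_getElem]; exact hs3
    have hle := sorted_le_get_iff l hl m (s - 1) hi
    have hlt := sorted_le_get_iff l hl (m + 1) (s - 1) hi
    rw [hget] at hle hlt
    have h1 : s - 1 < l.countP (fun x => decide (m ≤ x)) := hle.mp le_rfl
    have h2 : ¬ (s - 1 < l.countP (fun x => decide (m + 1 ≤ x))) := fun hc => by
      have := hlt.mpr hc; omega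
    unfold hookLen at hs4
    rw [List.getD_eq_getElem _ _ hi, hs3] at hs4
    have hpc : partConj l m = l.countP (fun x => decide (m ≤ x)) := rfl
    rw [hpc] at hs4
    exact ⟨s, by omega, by omega, by push_cast at hs4 ⊢; omega⟩
  · rintro ⟨c, hc1, hc2, hc3⟩
    have hc0 : 1 ≤ c := by omega
    have hlen : l.countP (fun x => decide (m ≤ x)) ≤ l.length := List.countP_le_length
    have hi : c - 1 < l.length := by omega
    have hle := sorted_le_get_iff l hl m (c - 1) hi
    have hlt := sorted_le_get_iff l hl (m + 1) (c - 1) hi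
    have hgm : m ≤ l.get ⟨c - 1, hi⟩ := hle.mpr (by omega)
    have hgm2 : ¬ (m + 1 ≤ l.get ⟨c - 1, hi⟩) := fun hc => by
      have := hlt.mp hc; omega
    have hget : l.get ⟨c - 1, hi⟩ = m := by omega
    have hgd : l.getD (c - 1) 0 = m := by
      rw [List.getD_eq_getElem _ _ hi]; rw [List.get_eq_getElem] at hget; exact hget
    refine ⟨c, hc0, by omega, hgd, ?_⟩
    unfold hookLen
    rw [List.getD_eq_getElem _ _ hi]
    rw [List.get_eq_getElem] at hget
    rw [hget]
    have hpc : partConj l m = l.countP (fun x => decide (m ≤ x)) := rfl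
    rw [hpc]
    push_cast at hc3 ⊢
    omega

section Core

variable (m : ℕ) (h : ℤ)

/-- decomposition of a multiset by comparison with m -/
lemma decomp (s : Multiset ℕ) :
    s.filter (fun x => m < x) + replicate (s.count m) m + s.filter (fun x => x < m) = s := by
  ext b
  simp only [count_add, count_filter, count_replicate]
  split_ifs <;> first | omega | (subst_vars; omega)

lemma sum_map_add_const (t : Multiset ℕ) :
    (t.map (fun x => x + m)).sum = t.sum + Multiset.card t * m := by
  induction t using Multiset.induction_on with
  | empty => simp
  | cons a t ih =>
    simp only [Multiset.map_cons, Multiset.sum_cons, Multiset.card_cons, ih]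
    ring

lemma sum_map_sub_const (t : Multiset ℕ) :
    (∀ x ∈ t, m ≤ x) → (t.map (fun x => x - m)).sum + Multiset.card t * m = t.sum := by
  induction t using Multiset.induction_on with
  | empty => simp
  | cons a t ih =>
    intro ht
    have hma := ht a (Multiset.mem_cons_self a t)
    have ih' := ih (fun x hx => ht x (Multiset.mem_cons_of_mem hx))
    simp only [Multiset.map_cons, Multiset.sum_cons, Multiset.card_cons]
    have : (Multiset.card t + 1) * m = Multiset.card t * m + m := by ring
    omega

/-- The forward map. -/
def fmap (s : Multiset ℕ) : Multiset ℕ :=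
  (s.filter (fun x => m < x)).map (fun x => x + m) +
  replicate ((((s.count m : ℤ) - h - 1 - s.countP (fun x => m < x)) / 2).toNat) (2 * m) +
  (m ::ₘ s.filter (fun x => x < m))

/-- The backward map. -/
def gmap (u : Multiset ℕ) : Multiset ℕ :=
  (u.filter (fun x => 2 * m < x)).map (fun x => x - m) +
  replicate (((u.countP (fun x => 2 * m < x) : ℤ) + h + 1 +
      2 * (u.count (2 * m) : ℤ)).toNat) m +
  u.filter (fun x => x < m)

end Core

section Comp

variable (m : ℕ) (h : ℤ)

lemma countP_replicate' (p : ℕ → Prop) [DecidablePred p] (r c : ℕ) :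
    countP p (replicate r c) = if p c then r else 0 := by
  split_ifs with hp
  · rw [Multiset.countP_eq_card.2 (fun a ha => by rwa [(Multiset.mem_replicate.1 ha).2]),
      Multiset.card_replicate]
  · exact Multiset.countP_eq_zero.2 (fun a ha => by rwa [(Multiset.mem_replicate.1 ha).2])

lemma filter_replicate' (p : ℕ → Prop) [DecidablePred p] (r c : ℕ) :
    Multiset.filter p (replicate r c) = if p c then replicate r c else 0 := by
  split_ifs with hp
  · exact Multiset.filter_eq_self.2 (fun a ha => by rwa [(Multiset.mem_replicate.1 ha).2])
  · exact Multiset.filter_eq_nil.2 (fun a ha => by rwa [(Multiset.mem_replicate.1 ha).2])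

lemma map_count_eq_zero (f : ℕ → ℕ) (t : Multiset ℕ) (c : ℕ) (hf : ∀ y ∈ t, f y ≠ c) :
    (t.map f).count c = 0 := by
  rw [Multiset.count_eq_zero]
  intro hmem
  obtain ⟨y, hy, hyc⟩ := Multiset.mem_map.1 hmem
  exact hf y hy hyc

lemma fmap_filter_big (s : Multiset ℕ) :
    (fmap m h s).filter (fun x => 2 * m < x) = (s.filter (fun x => m < x)).map (fun x => x + m) := by
  unfold fmap
  set R := (((s.count m : ℤ) - h - 1 - s.countP (fun x => m < x)) / 2).toNat with hR
  rw [Multiset.filter_add, Multiset.filter_add, Multiset.filter_map]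
  have e1 : Multiset.filter ((fun x => 2 * m < x) ∘ (fun x => x + m)) (s.filter (fun x => m < x))
      = s.filter (fun x => m < x) :=
    Multiset.filter_eq_self.2
      (fun y hy => by have := (Multiset.mem_filter.1 hy).2; simp only [Function.comp]; omega)
  have e2 : Multiset.filter (fun x => 2 * m < x) (replicate R (2 * m)) = 0 :=
    Multiset.filter_eq_nil.2 (fun a ha => by have := (Multiset.mem_replicate.1 ha).2; omega)
  have e3 : Multiset.filter (fun x => 2 * m < x) (m ::ₘ s.filter (fun x => x < m)) = 0 := by
    rw [Multiset.filter_cons_of_neg _ (by omega : ¬ 2 * m < m)]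
    exact Multiset.filter_eq_nil.2 (fun a ha => by have := (Multiset.mem_filter.1 ha).2; omega)
  rw [e1, e2, e3, add_zero, add_zero]

lemma fmap_filter_small (s : Multiset ℕ) :
    (fmap m h s).filter (fun x => x < m) = s.filter (fun x => x < m) := by
  unfold fmap
  set R := (((s.count m : ℤ) - h - 1 - s.countP (fun x => m < x)) / 2).toNat with hR
  rw [Multiset.filter_add, Multiset.filter_add]
  have e1 : Multiset.filter (fun x => x < m) ((s.filter (fun x => m < x)).map (fun x => x + m))
      = 0 :=
    Multiset.filter_eq_nil.2 (fun a ha => by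
      obtain ⟨y, hy, rfl⟩ := Multiset.mem_map.1 ha
      have := (Multiset.mem_filter.1 hy).2; omega)
  have e2 : Multiset.filter (fun x => x < m) (replicate R (2 * m)) = 0 :=
    Multiset.filter_eq_nil.2 (fun a ha => by have := (Multiset.mem_replicate.1 ha).2; omega)
  have e3 : Multiset.filter (fun x => x < m) (m ::ₘ s.filter (fun x => x < m))
      = s.filter (fun x => x < m) := by
    rw [Multiset.filter_cons_of_neg (p := fun x => x < m) _ (by omega : ¬ m < m)]
    exact Multiset.filter_eq_self.2 (fun a ha => (Multiset.mem_filter.1 ha).2)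
  rw [e1, e2, e3, zero_add, zero_add]

lemma fmap_count_2m (hm : 1 ≤ m) (s : Multiset ℕ) :
    (fmap m h s).count (2 * m) =
      (((s.count m : ℤ) - h - 1 - s.countP (fun x => m < x)) / 2).toNat := by
  unfold fmap
  set R := (((s.count m : ℤ) - h - 1 - s.countP (fun x => m < x)) / 2).toNat with hR
  rw [Multiset.count_add, Multiset.count_add]
  have e1 : ((s.filter (fun x => m < x)).map (fun x => x + m)).count (2 * m) = 0 :=
    map_count_eq_zero _ _ _ (fun y hy => by have := (Multiset.mem_filter.1 hy).2; omega)
  have e2 : (replicate R (2 * m)).count (2 * m) = R := by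
    rw [Multiset.count_replicate, if_pos rfl]
  have e3 : (m ::ₘ s.filter (fun x => x < m)).count (2 * m) = 0 := by
    rw [Multiset.count_cons, if_neg (by omega : ¬ 2 * m = m)]
    rw [Multiset.count_eq_zero.2 (fun hc : 2 * m ∈ s.filter (fun x => x < m) => by
      have := (Multiset.mem_filter.1 hc).2; omega)]
  rw [e1, e2, e3, zero_add, add_zero]

lemma fmap_count_m (hm : 1 ≤ m) (s : Multiset ℕ) : (fmap m h s).count m = 1 := by
  unfold fmap
  set R := (((s.count m : ℤ) - h - 1 - s.countP (fun x => m < x)) / 2).toNat with hR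
  rw [Multiset.count_add, Multiset.count_add]
  have e1 : ((s.filter (fun x => m < x)).map (fun x => x + m)).count m = 0 :=
    map_count_eq_zero _ _ _ (fun y hy => by have := (Multiset.mem_filter.1 hy).2; omega)
  have e2 : (replicate R (2 * m)).count m = 0 := by
    rw [Multiset.count_replicate, if_neg (by omega : ¬ 2 * m = m)]
  have e3 : (m ::ₘ s.filter (fun x => x < m)).count m = 1 := by
    rw [Multiset.count_cons, if_pos rfl]
    rw [Multiset.count_eq_zero.2 (fun hc : m ∈ s.filter (fun x => x < m) => by
      have := (Multiset.mem_filter.1 hc).2; omega)]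
  rw [e1, e2, e3]

lemma fmap_count_mid (hm : 1 ≤ m) (s : Multiset ℕ) (j : ℕ) (hj1 : m + 1 ≤ j)
    (hj2 : j ≤ 2 * m - 1) : (fmap m h s).count j = 0 := by
  unfold fmap
  set R := (((s.count m : ℤ) - h - 1 - s.countP (fun x => m < x)) / 2).toNat with hR
  rw [Multiset.count_add, Multiset.count_add]
  have e1 : ((s.filter (fun x => m < x)).map (fun x => x + m)).count j = 0 :=
    map_count_eq_zero _ _ _ (fun y hy => by have := (Multiset.mem_filter.1 hy).2; omega)
  have e2 : (replicate R (2 * m)).count j = 0 := by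
    rw [Multiset.count_replicate, if_neg (by omega : ¬ 2 * m = j)]
  have e3 : (m ::ₘ s.filter (fun x => x < m)).count j = 0 := by
    rw [Multiset.count_cons, if_neg (by omega : ¬ j = m)]
    rw [Multiset.count_eq_zero.2 (fun hc : j ∈ s.filter (fun x => x < m) => by
      have := (Multiset.mem_filter.1 hc).2; omega)]
  rw [e1, e2, e3]

lemma fmap_countP_ge (hm : 1 ≤ m) (s : Multiset ℕ) :
    (fmap m h s).countP (fun x => 2 * m ≤ x) =
      s.countP (fun x => m < x) +
        (((s.count m : ℤ) - h - 1 - s.countP (fun x => m < x)) / 2).toNat := by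
  unfold fmap
  set R := (((s.count m : ℤ) - h - 1 - s.countP (fun x => m < x)) / 2).toNat with hR
  rw [Multiset.countP_add, Multiset.countP_add]
  have e1 : ((s.filter (fun x => m < x)).map (fun x => x + m)).countP (fun x => 2 * m ≤ x)
      = s.countP (fun x => m < x) := by
    rw [Multiset.countP_eq_card.2 (fun a ha => by
      obtain ⟨y, hy, rfl⟩ := Multiset.mem_map.1 ha
      have := (Multiset.mem_filter.1 hy).2; omega)]
    rw [Multiset.card_map, ← Multiset.countP_eq_card_filter]
  have e2 : (replicate R (2 * m)).countP (fun x => 2 * m ≤ x) = R := by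
    rw [countP_replicate', if_pos (le_refl (2 * m))]
  have e3 : (m ::ₘ s.filter (fun x => x < m)).countP (fun x => 2 * m ≤ x) = 0 :=
    Multiset.countP_eq_zero.2 (fun a ha => by
      rcases Multiset.mem_cons.1 ha with rfl | ha'
      · omega
      · have := (Multiset.mem_filter.1 ha').2; omega)
  rw [e1, e2, e3, add_zero]

lemma fmap_sum (hm : 1 ≤ m) (s : Multiset ℕ) :
    (fmap m h s).sum = (s.filter (fun x => m < x)).sum + s.countP (fun x => m < x) * m +
      (((s.count m : ℤ) - h - 1 - s.countP (fun x => m < x)) / 2).toNat * (2 * m) +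
      m + (s.filter (fun x => x < m)).sum := by
  unfold fmap
  rw [Multiset.sum_add, Multiset.sum_add, Multiset.sum_cons, sum_map_add_const,
    Multiset.sum_replicate, smul_eq_mul, ← Multiset.countP_eq_card_filter]
  ring

lemma fmap_pos (hm : 1 ≤ m) (s : Multiset ℕ) (hs : ∀ x ∈ s, 0 < x) :
    ∀ x ∈ fmap m h s, 0 < x := by
  intro x hx
  unfold fmap at hx
  rcases Multiset.mem_add.1 hx with hx' | hx'
  · rcases Multiset.mem_add.1 hx' with hx'' | hx''
    · obtain ⟨y, hy, rfl⟩ := Multiset.mem_map.1 hx''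
      omega
    · have := (Multiset.mem_replicate.1 hx'').2; omega
  · rcases Multiset.mem_cons.1 hx' with rfl | hx''
    · omega
    · exact hs x (Multiset.mem_filter.1 hx'').1

lemma fmap_countP_gt (hm : 1 ≤ m) (s : Multiset ℕ) :
    (fmap m h s).countP (fun x => 2 * m < x) = s.countP (fun x => m < x) := by
  unfold fmap
  set R := (((s.count m : ℤ) - h - 1 - s.countP (fun x => m < x)) / 2).toNat with hR
  rw [Multiset.countP_add, Multiset.countP_add]
  have e1 : ((s.filter (fun x => m < x)).map (fun x => x + m)).countP (fun x => 2 * m < x)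
      = s.countP (fun x => m < x) := by
    rw [Multiset.countP_eq_card.2 (fun a ha => by
      obtain ⟨y, hy, rfl⟩ := Multiset.mem_map.1 ha
      have := (Multiset.mem_filter.1 hy).2; omega)]
    rw [Multiset.card_map, ← Multiset.countP_eq_card_filter]
  have e2 : (replicate R (2 * m)).countP (fun x => 2 * m < x) = 0 := by
    rw [countP_replicate', if_neg (by omega : ¬ 2 * m < 2 * m)]
  have e3 : (m ::ₘ s.filter (fun x => x < m)).countP (fun x => 2 * m < x) = 0 :=
    Multiset.countP_eq_zero.2 (fun a ha => by
      rcases Multiset.mem_cons.1 ha with rfl | ha'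
      · omega
      · have := (Multiset.mem_filter.1 ha').2; omega)
  rw [e1, e2, e3, add_zero, add_zero]

lemma gmap_filter_big (hm : 1 ≤ m) (u : Multiset ℕ) :
    (gmap m h u).filter (fun x => m < x) = (u.filter (fun x => 2 * m < x)).map (fun x => x - m) := by
  unfold gmap
  set BB := ((u.countP (fun x => 2 * m < x) : ℤ) + h + 1 + 2 * (u.count (2 * m) : ℤ)).toNat with hBB
  rw [Multiset.filter_add, Multiset.filter_add]
  have e1 : Multiset.filter (fun x => m < x) ((u.filter (fun x => 2 * m < x)).map (fun x => x - m))
      = (u.filter (fun x => 2 * m < x)).map (fun x => x - m) :=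
    Multiset.filter_eq_self.2 (fun a ha => by
      obtain ⟨y, hy, rfl⟩ := Multiset.mem_map.1 ha
      have := (Multiset.mem_filter.1 hy).2; omega)
  have e2 : Multiset.filter (fun x => m < x) (replicate BB m) = 0 :=
    Multiset.filter_eq_nil.2 (fun a ha => by have := (Multiset.mem_replicate.1 ha).2; omega)
  have e3 : Multiset.filter (fun x => m < x) (u.filter (fun x => x < m)) = 0 :=
    Multiset.filter_eq_nil.2 (fun a ha => by have := (Multiset.mem_filter.1 ha).2; omega)
  rw [e1, e2, e3, add_zero, add_zero]

lemma gmap_filter_small (hm : 1 ≤ m) (u : Multiset ℕ) :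
    (gmap m h u).filter (fun x => x < m) = u.filter (fun x => x < m) := by
  unfold gmap
  set BB := ((u.countP (fun x => 2 * m < x) : ℤ) + h + 1 + 2 * (u.count (2 * m) : ℤ)).toNat with hBB
  rw [Multiset.filter_add, Multiset.filter_add]
  have e1 : Multiset.filter (fun x => x < m) ((u.filter (fun x => 2 * m < x)).map (fun x => x - m))
      = 0 :=
    Multiset.filter_eq_nil.2 (fun a ha => by
      obtain ⟨y, hy, rfl⟩ := Multiset.mem_map.1 ha
      have := (Multiset.mem_filter.1 hy).2; omega)
  have e2 : Multiset.filter (fun x => x < m) (replicate BB m) = 0 :=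
    Multiset.filter_eq_nil.2 (fun a ha => by have := (Multiset.mem_replicate.1 ha).2; omega)
  have e3 : Multiset.filter (fun x => x < m) (u.filter (fun x => x < m))
      = u.filter (fun x => x < m) :=
    Multiset.filter_eq_self.2 (fun a ha => (Multiset.mem_filter.1 ha).2)
  rw [e1, e2, e3, zero_add, zero_add]

lemma gmap_countP_gt (hm : 1 ≤ m) (u : Multiset ℕ) :
    (gmap m h u).countP (fun x => m < x) = u.countP (fun x => 2 * m < x) := by
  rw [Multiset.countP_eq_card_filter, gmap_filter_big m h hm u, Multiset.card_map,
    ← Multiset.countP_eq_card_filter]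

lemma gmap_count_m (hm : 1 ≤ m) (u : Multiset ℕ) :
    (gmap m h u).count m =
      ((u.countP (fun x => 2 * m < x) : ℤ) + h + 1 + 2 * (u.count (2 * m) : ℤ)).toNat := by
  unfold gmap
  set BB := ((u.countP (fun x => 2 * m < x) : ℤ) + h + 1 + 2 * (u.count (2 * m) : ℤ)).toNat with hBB
  rw [Multiset.count_add, Multiset.count_add]
  have e1 : ((u.filter (fun x => 2 * m < x)).map (fun x => x - m)).count m = 0 :=
    map_count_eq_zero _ _ _ (fun y hy => by have := (Multiset.mem_filter.1 hy).2; omega)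
  have e2 : (replicate BB m).count m = BB := by rw [Multiset.count_replicate, if_pos rfl]
  have e3 : (u.filter (fun x => x < m)).count m = 0 :=
    Multiset.count_eq_zero.2 (fun hc : m ∈ u.filter (fun x => x < m) => by
      have := (Multiset.mem_filter.1 hc).2; omega)
  rw [e1, e2, e3, zero_add, add_zero]

lemma gmap_pos (hm : 1 ≤ m) (u : Multiset ℕ) (hu : ∀ x ∈ u, 0 < x) :
    ∀ x ∈ gmap m h u, 0 < x := by
  intro x hx
  unfold gmap at hx
  rcases Multiset.mem_add.1 hx with hx' | hx'
  · rcases Multiset.mem_add.1 hx' with hx'' | hx''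
    · obtain ⟨y, hy, rfl⟩ := Multiset.mem_map.1 hx''
      have := (Multiset.mem_filter.1 hy).2; omega
    · have := (Multiset.mem_replicate.1 hx'').2; omega
  · exact hu x (Multiset.mem_filter.1 hx').1

lemma decomp2 (hm : 1 ≤ m) (u : Multiset ℕ) (h1 : u.count m = 1)
    (h2 : ∀ j : ℕ, m + 1 ≤ j → j ≤ 2 * m - 1 → u.count j = 0) :
    u.filter (fun x => 2 * m < x) + replicate (u.count (2 * m)) (2 * m) +
      (m ::ₘ u.filter (fun x => x < m)) = u := by
  ext b
  rw [Multiset.count_add, Multiset.count_add, Multiset.count_cons, Multiset.count_replicate,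
    Multiset.count_filter, Multiset.count_filter]
  by_cases hb1 : 2 * m < b
  · rw [if_pos hb1, if_neg (by omega : ¬ 2 * m = b), if_neg (by omega : ¬ b < m),
      if_neg (by omega : ¬ b = m)]
    omega
  · rcases eq_or_ne b (2 * m) with rfl | hb2
    · rw [if_neg hb1, if_pos rfl, if_neg (by omega : ¬ 2 * m < m),
        if_neg (by omega : ¬ 2 * m = m)]
      omega
    · rcases eq_or_ne b m with rfl | hb3
      · rw [if_neg hb1, if_neg (by omega : ¬ 2 * b = b), if_neg (by omega : ¬ b < b),
          if_pos rfl, h1]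
      · by_cases hb4 : b < m
        · rw [if_neg hb1, if_neg (by omega : ¬ 2 * m = b), if_pos hb4, if_neg hb3]
          omega
        · rw [if_neg hb1, if_neg (by omega : ¬ 2 * m = b), if_neg hb4, if_neg hb3,
            h2 b (by omega) (by omega)]

end Comp

section Main

variable (m : ℕ) (h : ℤ) (n : ℕ)

def PL (s : Multiset ℕ) : Prop :=
  (∀ x ∈ s, 0 < x) ∧ s.sum = n ∧
  ∃ c : ℕ, s.countP (fun x => m < x) < c ∧ c ≤ s.countP (fun x => m < x) + s.count m ∧
    2 * (c : ℤ) = (s.countP (fun x => m < x) : ℤ) + (s.count m : ℤ) + 1 - h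

def PR (u : Multiset ℕ) : Prop :=
  (∀ x ∈ u, 0 < x) ∧ (u.sum : ℤ) = (n : ℤ) - (m : ℤ) * h ∧ u.count m = 1 ∧
  (∀ j : ℕ, m + 1 ≤ j → j ≤ 2 * m - 1 → u.count j = 0) ∧
  -h ≤ (u.countP (fun x => 2 * m ≤ x) : ℤ)

lemma f_mem (hm : 1 ≤ m) (s : Multiset ℕ) (hs : PL m h n s) : PR m h n (fmap m h s) := by
  obtain ⟨hpos, hsum, c, hc1, hc2, hc3⟩ := hs
  set a := s.countP (fun x => m < x) with ha
  set b := s.count m with hb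
  set R := (((b : ℤ) - h - 1 - a) / 2).toNat with hRdef
  have hR : (R : ℤ) = (c : ℤ) - 1 - a := by
    have e : (b : ℤ) - h - 1 - a = 2 * ((c : ℤ) - 1 - a) := by omega
    rw [hRdef, e, Int.mul_ediv_cancel_left _ (by norm_num)]
    exact Int.toNat_of_nonneg (by omega)
  refine ⟨fmap_pos m h hm s hpos, ?_, fmap_count_m m h hm s, fmap_count_mid m h hm s, ?_⟩
  · have f1 : (fmap m h s).sum = (s.filter (fun x => m < x)).sum + a * m + R * (2 * m) +
        m + (s.filter (fun x => x < m)).sum := fmap_sum m h hm s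
    have f2 : (s.filter (fun x => m < x)).sum + b * m + (s.filter (fun x => x < m)).sum = n := by
      have := congrArg Multiset.sum (decomp m s)
      rw [Multiset.sum_add, Multiset.sum_add, Multiset.sum_replicate, smul_eq_mul] at this
      rw [← hsum, ← this]
    have key : (a : ℤ) + 2 * R + 1 - b = -h := by omega
    have f1' : ((fmap m h s).sum : ℤ) = ((s.filter (fun x => m < x)).sum : ℤ) + a * m +
        R * (2 * m) + m + ((s.filter (fun x => x < m)).sum : ℤ) := by exact_mod_cast f1
    have f2' : ((s.filter (fun x => m < x)).sum : ℤ) + b * m +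
        ((s.filter (fun x => x < m)).sum : ℤ) = n := by exact_mod_cast f2
    rw [f1', ← f2']
    linear_combination (m : ℤ) * key
  · rw [fmap_countP_ge m h hm s]
    push_cast [← ha, ← hb, ← hRdef]
    omega

lemma g_mem (hm : 1 ≤ m) (u : Multiset ℕ) (hu : PR m h n u) : PL m h n (gmap m h u) := by
  obtain ⟨hpos, hsum, hcm, hmid, hk⟩ := hu
  set A := u.countP (fun x => 2 * m < x) with hA
  set r := u.count (2 * m) with hr
  set BB := ((A : ℤ) + h + 1 + 2 * (r : ℤ)).toNat with hBBdef
  have hsplit : u.countP (fun x => 2 * m ≤ x) = A + r := countP_le_split (2 * m) u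
  rw [hsplit] at hk
  push_cast at hk
  have hBB : (BB : ℤ) = (A : ℤ) + h + 1 + 2 * r := by
    rw [hBBdef]; exact Int.toNat_of_nonneg (by omega)
  refine ⟨gmap_pos m h hm u hpos, ?_, ?_⟩
  · have Gsum := sum_map_sub_const m (u.filter (fun x => 2 * m < x))
      (fun x hx => by have := (Multiset.mem_filter.1 hx).2; omega)
    rw [← Multiset.countP_eq_card_filter, ← hA] at Gsum
    have f1 : (gmap m h u).sum = ((u.filter (fun x => 2 * m < x)).map (fun x => x - m)).sum +
        BB * m + (u.filter (fun x => x < m)).sum := by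
      unfold gmap
      rw [Multiset.sum_add, Multiset.sum_add, Multiset.sum_replicate, smul_eq_mul, ← hA, ← hr,
        ← hBBdef]
    have f2 : (u.filter (fun x => 2 * m < x)).sum + r * (2 * m) + m +
        (u.filter (fun x => x < m)).sum = u.sum := by
      have := congrArg Multiset.sum (decomp2 m hm u hcm hmid)
      rw [Multiset.sum_add, Multiset.sum_add, Multiset.sum_replicate, smul_eq_mul,
        Multiset.sum_cons, ← hr] at this
      omega
    have key : (BB : ℤ) - (A : ℤ) - 2 * r - 1 = h := by omega
    have hn' : ((gmap m h u).sum : ℤ) = (n : ℤ) := by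
      have f1' : ((gmap m h u).sum : ℤ) =
          (((u.filter (fun x => 2 * m < x)).map (fun x => x - m)).sum : ℤ) +
          BB * m + ((u.filter (fun x => x < m)).sum : ℤ) := by exact_mod_cast f1
      have f2' : ((u.filter (fun x => 2 * m < x)).sum : ℤ) + r * (2 * m) + m +
          ((u.filter (fun x => x < m)).sum : ℤ) = (u.sum : ℤ) := by exact_mod_cast f2
      have G' : (((u.filter (fun x => 2 * m < x)).map (fun x => x - m)).sum : ℤ) + A * m =
          ((u.filter (fun x => 2 * m < x)).sum : ℤ) := by exact_mod_cast Gsum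
      rw [f1']
      linear_combination G' + f2' + hsum + (m : ℤ) * key
    exact_mod_cast hn'
  · refine ⟨A + r + 1, ?_, ?_, ?_⟩
    · rw [gmap_countP_gt m h hm u, ← hA]; omega
    · rw [gmap_countP_gt m h hm u, gmap_count_m m h hm u, ← hA, ← hr, ← hBBdef]
      omega
    · rw [gmap_countP_gt m h hm u, gmap_count_m m h hm u, ← hA, ← hr, ← hBBdef]
      push_cast
      omega

lemma gf (hm : 1 ≤ m) (s : Multiset ℕ) (hs : PL m h n s) : gmap m h (fmap m h s) = s := by
  obtain ⟨hpos, hsum, c, hc1, hc2, hc3⟩ := hs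
  set a := s.countP (fun x => m < x) with ha
  set b := s.count m with hb
  set R := (((b : ℤ) - h - 1 - a) / 2).toNat with hRdef
  have hR : (R : ℤ) = (c : ℤ) - 1 - a := by
    have e : (b : ℤ) - h - 1 - a = 2 * ((c : ℤ) - 1 - a) := by omega
    rw [hRdef, e, Int.mul_ediv_cancel_left _ (by norm_num)]
    exact Int.toNat_of_nonneg (by omega)
  unfold gmap
  rw [fmap_countP_gt m h hm s, fmap_count_2m m h hm s, fmap_filter_big m h s,
    fmap_filter_small m h s, Multiset.map_map, ← ha, ← hb, ← hRdef]
  have e1 : Multiset.map ((fun x => x - m) ∘ (fun x => x + m)) (s.filter (fun x => m < x)) =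
      s.filter (fun x => m < x) := by
    rw [Multiset.map_congr rfl (fun x _ => by simp only [Function.comp, id]; omega :
      ∀ x ∈ s.filter (fun x => m < x), ((fun x => x - m) ∘ (fun x => x + m)) x = id x)]
    exact Multiset.map_id _
  have e2 : ((a : ℤ) + h + 1 + 2 * (R : ℤ)).toNat = b := by omega
  rw [e1, e2]
  exact decomp m s

lemma fg (hm : 1 ≤ m) (u : Multiset ℕ) (hu : PR m h n u) : fmap m h (gmap m h u) = u := by
  obtain ⟨hpos, hsum, hcm, hmid, hk⟩ := hu
  set A := u.countP (fun x => 2 * m < x) with hA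
  set r := u.count (2 * m) with hr
  set BB := ((A : ℤ) + h + 1 + 2 * (r : ℤ)).toNat with hBBdef
  have hsplit : u.countP (fun x => 2 * m ≤ x) = A + r := countP_le_split (2 * m) u
  rw [hsplit] at hk
  push_cast at hk
  have hBB : (BB : ℤ) = (A : ℤ) + h + 1 + 2 * r := by
    rw [hBBdef]; exact Int.toNat_of_nonneg (by omega)
  unfold fmap
  rw [gmap_count_m m h hm u, gmap_countP_gt m h hm u, gmap_filter_big m h hm u,
    gmap_filter_small m h hm u, Multiset.map_map, ← hA, ← hr, ← hBBdef]
  have e1 : Multiset.map ((fun x => x + m) ∘ (fun x => x - m)) (u.filter (fun x => 2 * m < x)) =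
      u.filter (fun x => 2 * m < x) := by
    rw [Multiset.map_congr rfl (fun x hx => by
      have := (Multiset.mem_filter.1 hx).2
      simp only [Function.comp, id]; omega :
      ∀ x ∈ u.filter (fun x => 2 * m < x), ((fun x => x + m) ∘ (fun x => x - m)) x = id x)]
    exact Multiset.map_id _
  have e2 : (((BB : ℤ) - h - 1 - (A : ℤ)) / 2).toNat = r := by
    have e : (BB : ℤ) - h - 1 - A = 2 * (r : ℤ) := by omega
    rw [e, Int.mul_ediv_cancel_left _ (by norm_num)]
    exact Int.toNat_natCast r
  rw [e1, e2]
  exact decomp2 m hm u hcm hmid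

end Main

section Assemble

variable (m : ℕ) (h : ℤ) (n : ℕ)

lemma list_split (c : ℕ) (l : List ℕ) :
    l.countP (fun x => decide (c ≤ x)) = l.countP (fun x => decide (c < x)) + l.count c := by
  have h1 := (Multiset.coe_countP (fun x => c ≤ x) l).symm
  have h2 := (Multiset.coe_countP (fun x => c < x) l).symm
  have h3 := (Multiset.coe_count c l).symm
  rw [h1, h2, h3]
  exact countP_le_split c (↑l : Multiset ℕ)

lemma list_lt_eq (c : ℕ) (l : List ℕ) :
    l.countP (fun x => decide (c < x)) = l.countP (fun x => decide (c + 1 ≤ x)) := by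
  apply List.countP_congr
  intro a _
  show decide (c < a) = true ↔ decide (c + 1 ≤ a) = true
  simp only [decide_eq_true_eq]
  omega

lemma listL_iff (hm : 1 ≤ m) (l : List ℕ) :
    (IsPartition l ∧ l.sum = n ∧ ∃ s : ℕ, 1 ≤ s ∧ s ≤ l.length ∧ l.getD (s - 1) 0 = m ∧
        hookLen l s m = (s : ℤ) + h)
    ↔ (l.Pairwise (· ≥ ·) ∧ PL m h n ↑l) := by
  have hsplit := list_split m l
  have hlt := list_lt_eq m l
  constructor
  · rintro ⟨⟨hsort, hpos⟩, hsum, hex⟩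
    refine ⟨hsort, fun x hx => hpos x (Multiset.mem_coe.1 hx), by rw [Multiset.sum_coe]; exact hsum, ?_⟩
    obtain ⟨c, hc1, hc2, hc3⟩ := (exists_s_iff m hm h l hsort).1 hex
    refine ⟨c, ?_, ?_, ?_⟩
    · rw [Multiset.coe_countP]; omega
    · rw [Multiset.coe_countP, Multiset.coe_count]; omega
    · rw [Multiset.coe_countP, Multiset.coe_count]; push_cast at hc3 ⊢; omega
  · rintro ⟨hsort, hposM, hsumM, c, hc1, hc2, hc3⟩
    rw [Multiset.coe_countP] at hc1
    rw [Multiset.coe_countP, Multiset.coe_count] at hc2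
    rw [Multiset.coe_countP, Multiset.coe_count] at hc3
    refine ⟨⟨hsort, fun x hx => hposM x (Multiset.mem_coe.2 hx)⟩,
      by rw [Multiset.sum_coe] at hsumM; exact hsumM, ?_⟩
    apply (exists_s_iff m hm h l hsort).2
    exact ⟨c, by omega, by omega, by push_cast at hc3 ⊢; omega⟩

lemma listR_iff (l : List ℕ) :
    (IsPartition l ∧ (l.sum : ℤ) = (n : ℤ) - (m : ℤ) * h ∧ l.count m = 1 ∧
      (∀ j : ℕ, m + 1 ≤ j → j ≤ 2 * m - 1 → l.count j = 0) ∧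
      -h ≤ (l.countP (fun x => decide (2 * m ≤ x)) : ℤ))
    ↔ (l.Pairwise (· ≥ ·) ∧ PR m h n ↑l) := by
  constructor
  · rintro ⟨⟨hs, hp⟩, h1, h2, h3, h4⟩
    exact ⟨hs, fun x hx => hp x (Multiset.mem_coe.1 hx),
      by rw [Multiset.sum_coe]; exact h1,
      by rw [Multiset.coe_count]; exact h2,
      fun j hj1 hj2 => by rw [Multiset.coe_count]; exact h3 j hj1 hj2,
      by rw [Multiset.coe_countP]; exact h4⟩
  · rintro ⟨hs, hp, h1, h2, h3, h4⟩
    rw [Multiset.sum_coe] at h1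
    rw [Multiset.coe_count] at h2
    rw [Multiset.coe_countP] at h4
    exact ⟨⟨hs, fun x hx => hp x (Multiset.mem_coe.2 hx)⟩, h1, h2,
      fun j hj1 hj2 => by have := h3 j hj1 hj2; rwa [Multiset.coe_count] at this, h4⟩

def sortedEquiv (P : Multiset ℕ → Prop) :
    {l : List ℕ // l.Pairwise (· ≥ ·) ∧ P ↑l} ≃ {s : Multiset ℕ // P s} where
  toFun l := ⟨(l.1 : Multiset ℕ), l.2.2⟩
  invFun s := ⟨Multiset.sort s.1 (· ≥ ·), Multiset.pairwise_sort _ _,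
    by rw [Multiset.sort_eq]; exact s.2⟩
  left_inv := by
    intro x
    apply Subtype.ext
    show Multiset.sort ↑x.1 (· ≥ ·) = x.1
    have hperm : (Multiset.sort (↑x.1 : Multiset ℕ) (· ≥ ·)).Perm x.1 := by
      rw [← Multiset.coe_eq_coe, Multiset.sort_eq]
    exact List.Perm.eq_of_pairwise' (Multiset.pairwise_sort _ _) x.2.1 hperm
  right_inv := by
    intro s
    apply Subtype.ext
    show (↑(Multiset.sort s.1 (· ≥ ·)) : Multiset ℕ) = s.1
    exact Multiset.sort_eq s.1 _

def mainEquiv (hm : 1 ≤ m) : {s : Multiset ℕ // PL m h n s} ≃ {u : Multiset ℕ // PR m h n u} where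
  toFun s := ⟨fmap m h s.1, f_mem m h n hm s.1 s.2⟩
  invFun u := ⟨gmap m h u.1, g_mem m h n hm u.1 u.2⟩
  left_inv s := Subtype.ext (gf m h n hm s.1 s.2)
  right_inv u := Subtype.ext (fg m h n hm u.1 u.2)

end Assemble

end Stmt9Aux

theorem stmt_9 (m : ℕ) (hm : 1 ≤ m) (h : ℤ) (n : ℕ) (hn : 1 ≤ n) :
    Nat.card {l : List ℕ // IsPartition l ∧ l.sum = n ∧
        ∃ s : ℕ, 1 ≤ s ∧ s ≤ l.length ∧ l.getD (s - 1) 0 = m ∧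
          hookLen l s m = (s : ℤ) + h} =
      Nat.card {l : List ℕ // IsPartition l ∧ (l.sum : ℤ) = (n : ℤ) - (m : ℤ) * h ∧
        l.count m = 1 ∧
        (∀ j : ℕ, m + 1 ≤ j → j ≤ 2 * m - 1 → l.count j = 0) ∧
        -h ≤ (l.countP (fun x => decide (2 * m ≤ x)) : ℤ)} := by
  have e1 := (Equiv.subtypeEquivRight (Stmt9Aux.listL_iff m h n hm)).trans
    (Stmt9Aux.sortedEquiv (Stmt9Aux.PL m h n))
  have e2 := (Equiv.subtypeEquivRight (Stmt9Aux.listR_iff m h n)).trans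
    (Stmt9Aux.sortedEquiv (Stmt9Aux.PR m h n))
  rw [Nat.card_congr e1, Nat.card_congr e2]
  exact Nat.card_congr (Stmt9Aux.mainEquiv m h n hm)
end
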